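/- Let T > 0, C > 0, k ≥ 0, m > k with m ≥ 2, K > 0 and λ, ε, β > 0. Let w : (0,T)×H → ℝ satisfy w(t,x) ≥ −C(1+‖x‖^k) for all (t,x) ∈ (0,T)×H. Then the inf-convolution w_{λ,ε,β} is real-valued and the function (t,x) ↦ w_{λ,ε,β}(t,x) − ‖x‖_{-1}²/(2ε) − t²/(2β) is concave on (0,T)×H. -/

import Mathlib

open scoped InnerProductSpace

/-!
For fixed `(s, y)`, the expression inside the infimum minus `‖x‖₋₁²/(2ε) + t²/(2β)` is affine in
`(t, x)`, since the quadratic terms in `x` and `t` cancel; an infimum of affine functions is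
concave. The infimum is finite because `k < m`: the penalty `λ e^{2mK(T−s)}‖y‖^m ≥ λ‖y‖^m`
absorbs the lower bound `−C(1 + ‖y‖^k)` on `w` up to a constant.
-/

/-- The set of values over which the infimum defining the inf-convolution
`w_{λ,ε,β}(t,x)` is taken. -/
noncomputable def infConvSet {H : Type*} [NormedAddCommGroup H] [InnerProductSpace ℝ H]
    (B : H →L[ℝ] H) (T m K lam ε β : ℝ) (w : ℝ → H → ℝ) (t : ℝ) (x : H) : Set ℝ :=
  (fun p : ℝ × H =>
      w p.1 p.2 + ⟪B (x - p.2), x - p.2⟫_ℝ / (2 * ε) + (t - p.1) ^ 2 / (2 * β)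
        + lam * Real.exp (2 * m * K * (T - p.1)) * ‖p.2‖ ^ m) ''
    (Set.Ioo 0 T ×ˢ (Set.univ : Set H))

/-- The inf-convolution
`w_{λ,ε,β}(t,x) = inf_{(s,y)∈(0,T)×H} { w(s,y) + ‖x−y‖₋₁²/(2ε) + (t−s)²/(2β) + λ e^{2mK(T−s)}‖y‖^m }`,
where `‖z‖₋₁² = ⟨Bz,z⟩`. -/
noncomputable def infConv {H : Type*} [NormedAddCommGroup H] [InnerProductSpace ℝ H]
    (B : H →L[ℝ] H) (T m K lam ε β : ℝ) (w : ℝ → H → ℝ) (t : ℝ) (x : H) : ℝ :=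
  sInf (infConvSet B T m K lam ε β w t x)

open Set

theorem exists_mul_rpow_le_mul_rpow_add {C lam k m : ℝ} (hC : 0 < C) (hlam : 0 < lam)
    (hk : 0 ≤ k) (hkm : k < m) : ∃ M : ℝ, ∀ r : ℝ, 0 ≤ r → C * r ^ k ≤ lam * r ^ m + M := by
  set R : ℝ := (C / lam) ^ (m - k)⁻¹
  have hR : 0 < R := by positivity
  have hRmk : R ^ (m - k) = C / lam := by
    rw [← Real.rpow_mul (by positivity), inv_mul_cancel₀ (sub_pos.2 hkm).ne', Real.rpow_one]
  refine ⟨C * R ^ k, fun r hr => ?_⟩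
  rcases le_total r R with hrR | hRr
  · have : C * r ^ k ≤ C * R ^ k := by gcongr
    have : 0 ≤ lam * r ^ m := by positivity
    linarith
  · have hr0 : 0 < r := hR.trans_le hRr
    have hCr : C ≤ lam * r ^ (m - k) := by
      rw [← div_le_iff₀' hlam, ← hRmk]
      gcongr
    have hsplit : r ^ m = r ^ k * r ^ (m - k) := by
      rw [← Real.rpow_add hr0, add_sub_cancel]
    have : C * r ^ k ≤ lam * r ^ m :=
      calc C * r ^ k ≤ lam * r ^ (m - k) * r ^ k := by gcongr
        _ = lam * r ^ m := by rw [hsplit]; ring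
    have : 0 ≤ C * R ^ k := by positivity
    linarith

theorem ConcaveOn.sInf_image_sub {ι E : Type*} [AddCommMonoid E] [SMul ℝ E] {s : Set E}
    {I : Set ι} {f : ι → E → ℝ} {q : E → ℝ} (hs : Convex ℝ s) (hI : I.Nonempty)
    (hf : ∀ i ∈ I, ConcaveOn ℝ s fun x => f i x - q x)
    (hbdd : ∀ x ∈ s, BddBelow ((f · x) '' I)) :
    ConcaveOn ℝ s fun x => sInf ((f · x) '' I) - q x := by
  refine ⟨hs, fun x hx y hy a b ha hb hab => ?_⟩
  suffices h : ∀ i ∈ I, a • (sInf ((f · x) '' I) - q x) + b • (sInf ((f · y) '' I) - q y)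
      + q (a • x + b • y) ≤ f i (a • x + b • y) by
    have := le_csInf (hI.image _) (forall_mem_image.2 h)
    linarith
  intro i hi
  have hx' : sInf ((f · x) '' I) ≤ f i x := csInf_le (hbdd x hx) (mem_image_of_mem _ hi)
  have hy' : sInf ((f · y) '' I) ≤ f i y := csInf_le (hbdd y hy) (mem_image_of_mem _ hi)
  have := (hf i hi).2 hx hy ha hb hab
  simp only [smul_eq_mul] at this ⊢
  linarith [mul_le_mul_of_nonneg_left hx' ha, mul_le_mul_of_nonneg_left hy' hb]

section InfConv

variable {H : Type*} [NormedAddCommGroup H] [InnerProductSpace ℝ H]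
  (B : H →L[ℝ] H) (T m K lam ε β : ℝ) (w : ℝ → H → ℝ)

noncomputable def infConvIntegrand (q p : ℝ × H) : ℝ :=
  w q.1 q.2 + ⟪B (p.2 - q.2), p.2 - q.2⟫_ℝ / (2 * ε) + (p.1 - q.1) ^ 2 / (2 * β)
    + lam * Real.exp (2 * m * K * (T - q.1)) * ‖q.2‖ ^ m

theorem infConvSet_eq_image (t : ℝ) (x : H) :
    infConvSet B T m K lam ε β w t x =
      (infConvIntegrand B T m K lam ε β w · (t, x)) '' (Ioo 0 T ×ˢ univ) :=
  rfl

theorem infConvSet_nonempty {T : ℝ} (hT : 0 < T) (t : ℝ) (x : H) :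
    (infConvSet B T m K lam ε β w t x).Nonempty :=
  ((nonempty_Ioo.2 hT).prod univ_nonempty).image _

theorem infConvSet_bddBelow (hBpos : ∀ x : H, 0 ≤ ⟪B x, x⟫_ℝ) {C k : ℝ} (hC : 0 < C)
    (hk : 0 ≤ k) (hkm : k < m) (hK : 0 < K) (hlam : 0 < lam) (hε : 0 < ε) (hβ : 0 < β)
    (hgrowth : ∀ t ∈ Ioo (0 : ℝ) T, ∀ x : H, -C * (1 + ‖x‖ ^ k) ≤ w t x) (t : ℝ) (x : H) :
    BddBelow (infConvSet B T m K lam ε β w t x) := by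
  obtain ⟨M, hM⟩ := exists_mul_rpow_le_mul_rpow_add hC hlam hk hkm
  refine ⟨-C - M, ?_⟩
  rintro _ ⟨⟨s, y⟩, ⟨hs, -⟩, rfl⟩
  have hw := hgrowth s hs y
  have hpow := hM ‖y‖ (norm_nonneg y)
  have hB : 0 ≤ ⟪B (x - y), x - y⟫_ℝ / (2 * ε) := div_nonneg (hBpos _) (by positivity)
  have ht : 0 ≤ (t - s) ^ 2 / (2 * β) := by positivity
  have hexp : lam * ‖y‖ ^ m ≤ lam * Real.exp (2 * m * K * (T - s)) * ‖y‖ ^ m := by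
    have hm : 0 ≤ m := hk.trans hkm.le
    have hTs : 0 ≤ T - s := sub_nonneg.2 hs.2.le
    gcongr
    exact le_mul_of_one_le_right hlam.le (Real.one_le_exp (by positivity))
  dsimp only
  linarith

theorem concaveOn_infConvIntegrand_sub (q : ℝ × H) :
    ConcaveOn ℝ univ fun p : ℝ × H =>
      infConvIntegrand B T m K lam ε β w q p - (⟪B p.2, p.2⟫_ℝ / (2 * ε) + p.1 ^ 2 / (2 * β)) := by
  -- the linear part `(t, x) ↦ -s t / β - (⟪B y, x⟫ + ⟪B x, y⟫) / (2ε)`, where `q = (s, y)`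
  let L : ℝ × H →L[ℝ] ℝ := -(q.1 / β) • ContinuousLinearMap.fst ℝ ℝ H
    - (2 * ε)⁻¹ • (innerSL ℝ (B q.2) + (innerSL ℝ q.2).comp B).comp (ContinuousLinearMap.snd ℝ ℝ H)
  refine ((L : ℝ × H →ₗ[ℝ] ℝ).concaveOn convex_univ).add_const
    (infConvIntegrand B T m K lam ε β w q 0) |>.congr fun p _ => ?_
  simp only [L, infConvIntegrand, Pi.add_apply, ContinuousLinearMap.coe_coe, sub_apply,
    smul_apply, add_apply, ContinuousLinearMap.comp_apply, ContinuousLinearMap.coe_fst',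
    ContinuousLinearMap.coe_snd', innerSL_apply_apply, smul_eq_mul, Prod.fst_zero, Prod.snd_zero,
    map_sub, map_zero, inner_sub_left, inner_sub_right, inner_zero_left, inner_zero_right,
    real_inner_comm]
  field_simp
  ring

end InfConv

theorem infConv_semiconcave_general
    {H : Type*} [NormedAddCommGroup H] [InnerProductSpace ℝ H]
    (B : H →L[ℝ] H) (hBpos : ∀ x : H, 0 ≤ ⟪B x, x⟫_ℝ)
    (T C k m K lam ε β : ℝ)
    (hT : 0 < T) (hC : 0 < C) (hk : 0 ≤ k) (hkm : k < m)
    (hK : 0 < K) (hlam : 0 < lam) (hε : 0 < ε) (hβ : 0 < β)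
    (w : ℝ → H → ℝ)
    (hgrowth : ∀ t ∈ Set.Ioo (0 : ℝ) T, ∀ x : H, -C * (1 + ‖x‖ ^ k) ≤ w t x) :
    (∀ t ∈ Set.Ioo (0 : ℝ) T, ∀ x : H,
        (infConvSet B T m K lam ε β w t x).Nonempty ∧
        BddBelow (infConvSet B T m K lam ε β w t x)) ∧
    ConcaveOn ℝ (Set.Ioo (0 : ℝ) T ×ˢ (Set.univ : Set H))
      (fun p : ℝ × H =>
        infConv B T m K lam ε β w p.1 p.2 - ⟪B p.2, p.2⟫_ℝ / (2 * ε) - p.1 ^ 2 / (2 * β)) := by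
  have hbdd := infConvSet_bddBelow B T m K lam ε β w hBpos hC hk hkm hK hlam hε hβ hgrowth
  refine ⟨fun t _ x => ⟨infConvSet_nonempty B m K lam ε β w hT t x, hbdd t x⟩, ?_⟩
  have hconvex := (convex_Ioo (0 : ℝ) T).prod (convex_univ (𝕜 := ℝ) (E := H))
  simp only [infConv, infConvSet_eq_image, sub_sub]
  exact ConcaveOn.sInf_image_sub hconvex ((nonempty_Ioo.2 hT).prod univ_nonempty)
    (fun q _ => (concaveOn_infConvIntegrand_sub B T m K lam ε β w q).subset (subset_univ _) hconvex)
    (fun p _ => hbdd p.1 p.2)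

/-- Lemma 4.2(ii) (inf-convolution case): if `w(t,x) ≥ −C(1+‖x‖^k)` with `k < m`, then the
inf-convolution `w_{λ,ε,β}` is real-valued (the defining infimum is over a nonempty set of
reals which is bounded below) and `(t,x) ↦ w_{λ,ε,β}(t,x) − ‖x‖₋₁²/(2ε) − t²/(2β)` is concave
on `(0,T) × H`. -/
theorem infConv_semiconcave
    {H : Type*} [NormedAddCommGroup H] [InnerProductSpace ℝ H] [CompleteSpace H]
    [TopologicalSpace.SeparableSpace H]
    (B : H →L[ℝ] H) (hBsa : IsSelfAdjoint B) (hBpos : ∀ x : H, 0 ≤ ⟪B x, x⟫_ℝ)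
    (T C k m K lam ε β : ℝ)
    (hT : 0 < T) (hC : 0 < C) (hk : 0 ≤ k) (hkm : k < m) (hm : 2 ≤ m)
    (hK : 0 < K) (hlam : 0 < lam) (hε : 0 < ε) (hβ : 0 < β)
    (w : ℝ → H → ℝ)
    (hgrowth : ∀ t ∈ Set.Ioo (0 : ℝ) T, ∀ x : H, -C * (1 + ‖x‖ ^ k) ≤ w t x) :
    (∀ t ∈ Set.Ioo (0 : ℝ) T, ∀ x : H,
        (infConvSet B T m K lam ε β w t x).Nonempty ∧
        BddBelow (infConvSet B T m K lam ε β w t x)) ∧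
    ConcaveOn ℝ (Set.Ioo (0 : ℝ) T ×ˢ (Set.univ : Set H))
      (fun p : ℝ × H =>
        infConv B T m K lam ε β w p.1 p.2 - ⟪B p.2, p.2⟫_ℝ / (2 * ε) - p.1 ^ 2 / (2 * β)) :=
  infConv_semiconcave_general B hBpos T C k m K lam ε β hT hC hk hkm hK hlam hε hβ w hgrowth
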